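/- If 0 ≤ v_r < 2√(g h_r), then the discharge-form inverse Lax curve φ̃_r has exactly one zero in (0,∞), namely h = (2√(g h_r) − v_r)²/(4g); i.e., for h > 0 one has φ̃_r(h) = 0 if and only if h = (2√(g h_r) − v_r)²/(4g). -/

import Mathlib

/-!
On `(0, h_r]` the curve is the rarefaction branch `v_r - 2√(g h_r) + 2√(g h)`, a strictly
increasing function whose only zero is `h* = (2√(g h_r) − v_r)²/(4g)`, and `h* ≤ h_r` because
`v_r ≥ 0`. On `(h_r, ∞)` the shock branch is `v_r` plus a positive term, so it does not vanish.
Since `h > 0`, the zeros of `φ̃_r = h φ_r` are those of `φ_r`.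
-/

/-- Inverse Lax curve through the right state `(hr, vr)`. -/
noncomputable def phir (g hr vr h : ℝ) : ℝ :=
  if h ≤ hr then vr - 2 * Real.sqrt (g * hr) + 2 * Real.sqrt (g * h)
  else vr + (h - hr) * Real.sqrt (g * (h + hr) / (2 * h * hr))

/-- Discharge-form inverse Lax curve through the right state. -/
noncomputable def phirTilde (g hr vr h : ℝ) : ℝ := h * phir g hr vr h

section

variable {g hr vr h : ℝ}

lemma sqrt_mul_eq_iff_eq_sq_div (hg : 0 < g) (hh : 0 ≤ h) {c : ℝ} (hc : 0 ≤ c) :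
    Real.sqrt (g * h) = c ↔ h = c ^ 2 / g := by
  rw [Real.sqrt_eq_iff_eq_sq (by positivity) hc, eq_div_iff hg.ne', mul_comm]

lemma phir_eq_zero_iff_of_le (hg : 0 < g) (hh : 0 ≤ h) (hle : h ≤ hr)
    (hv : vr ≤ 2 * Real.sqrt (g * hr)) :
    phir g hr vr h = 0 ↔ h = (2 * Real.sqrt (g * hr) - vr) ^ 2 / (4 * g) := by
  have hc : 0 ≤ (2 * Real.sqrt (g * hr) - vr) / 2 := by linarith
  calc phir g hr vr h = 0 ↔ Real.sqrt (g * h) = (2 * Real.sqrt (g * hr) - vr) / 2 := by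
        rw [phir, if_pos hle]
        constructor <;> intro _ <;> linarith
    _ ↔ h = (2 * Real.sqrt (g * hr) - vr) ^ 2 / (4 * g) := by
        rw [sqrt_mul_eq_iff_eq_sq_div hg hh hc]
        ring_nf

lemma phir_pos_of_lt (hg : 0 < g) (hhr : 0 < hr) (hv : 0 ≤ vr) (hlt : hr < h) :
    0 < phir g hr vr h := by
  have hroot : 0 < Real.sqrt (g * (h + hr) / (2 * h * hr)) := by
    have : 0 < h := hhr.trans hlt
    positivity
  rw [phir, if_neg hlt.not_ge]
  nlinarith

lemma rarefaction_zero_le (hg : 0 < g) (hhr : 0 ≤ hr) (hv₁ : 0 ≤ vr)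
    (hv₂ : vr ≤ 2 * Real.sqrt (g * hr)) :
    (2 * Real.sqrt (g * hr) - vr) ^ 2 / (4 * g) ≤ hr := by
  have hsq : Real.sqrt (g * hr) ^ 2 = g * hr := Real.sq_sqrt (by positivity)
  rw [div_le_iff₀ (by positivity)]
  nlinarith

end

/-- If `0 ≤ v_r < 2√(g h_r)`, the discharge-form inverse Lax curve has exactly one
zero in `(0, ∞)`, namely `h = (2√(g h_r) − v_r)²/(4g)`. -/
theorem phirTilde_unique_zero (g hr vr : ℝ) (hg : 0 < g) (hhr : 0 < hr)
    (hv₁ : 0 ≤ vr) (hv₂ : vr < 2 * Real.sqrt (g * hr)) :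
    ∀ h : ℝ, 0 < h →
      (phirTilde g hr vr h = 0 ↔ h = (2 * Real.sqrt (g * hr) - vr) ^ 2 / (4 * g)) := by
  intro h hh
  rw [phirTilde, mul_eq_zero, or_iff_right hh.ne']
  rcases le_or_gt h hr with hle | hlt
  · exact phir_eq_zero_iff_of_le hg hh.le hle hv₂.le
  · refine iff_of_false (phir_pos_of_lt hg hhr hv₁ hlt).ne' fun hzero => hlt.not_ge ?_
    exact hzero ▸ rarefaction_zero_le hg hhr.le hv₁ hv₂.le
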